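/- arXiv:2404.07082 — 4 statements merged into one kernel-verified Lean document; each statement's English description precedes it below -/
import Mathlib

section
/- Let E be a complex Hilbert space, ħ > 0 a real number, and let H and S be continuous linear operators on E satisfying (adjoint H) ∘ S = S ∘ H. Then probability is conserved under the pseudo-Hermitian time evolution: for every real t and all ψ, φ ∈ E, ⟪exp((−(t/ħ) * I) • H) ψ, S (exp((−(t/ħ) * I) • H) φ)⟫ = ⟪ψ, S φ⟫, where I is the imaginary unit. -/
/-! With `a = -(it/ħ) H`, the hypothesis says `S a = -a† S`, so `S` intertwines `exp a` with
`exp (-a†) = (exp a)†⁻¹`; hence `(exp a)† S exp a = S`, which is the claim after moving one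
exponential across the inner product. -/

open InnerProductSpace ContinuousLinearMap Complex

namespace NormedSpace

theorem star_exp_mul_mul_exp_eq_self (𝕂 : Type*) {𝔸 : Type*} [RCLike 𝕂] [NormedRing 𝔸]
    [NormedAlgebra 𝕂 𝔸] [CompleteSpace 𝔸] [StarRing 𝔸] [ContinuousStar 𝔸] {s a : 𝔸}
    (h : SemiconjBy s a (-star a)) : star (exp a) * s * exp a = s := by
  let _ : NormedAlgebra ℚ 𝔸 := NormedAlgebra.restrictScalars ℚ 𝕂 𝔸
  simpa only [neg_neg, star_exp] using h.exp_neg_mul_mul_exp_eq_self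

end NormedSpace

theorem SemiconjBy.smul_of_star_mul_eq_mul {A : Type*} [Ring A] [StarRing A] [Module ℂ A]
    [StarModule ℂ A] [IsScalarTower ℂ A A] [SMulCommClass ℂ A A] {s a : A} {c : ℂ}
    (hc : star c = -c) (h : star a * s = s * a) : SemiconjBy s (c • a) (-star (c • a)) := by
  rw [SemiconjBy, star_smul, hc, neg_smul, neg_neg, smul_mul_assoc, mul_smul_comm, h]

theorem pseudo_hermitian_probability_conservation_general
    {E : Type*} [NormedAddCommGroup E] [InnerProductSpace ℂ E] [CompleteSpace E]
    (hbar : ℝ)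
    (H S : E →L[ℂ] E)
    (hqh : (ContinuousLinearMap.adjoint H) ∘L S = S ∘L H) :
    ∀ (t : ℝ) (ψ φ : E),
      ⟪(NormedSpace.exp ((-(t / hbar : ℂ) * Complex.I) • H)) ψ,
        S ((NormedSpace.exp ((-(t / hbar : ℂ) * Complex.I) • H)) φ)⟫_ℂ
        = ⟪ψ, S φ⟫_ℂ := by
  intro t ψ φ
  have hc : star (-(t / hbar : ℂ) * I) = -(-(t / hbar : ℂ) * I) := by simp
  have hU := NormedSpace.star_exp_mul_mul_exp_eq_self ℂ
    (SemiconjBy.smul_of_star_mul_eq_mul (a := H) (s := S) hc hqh)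
  rw [← adjoint_inner_right, ← star_eq_adjoint]
  exact congrArg (⟪ψ, · φ⟫_ℂ) hU

theorem pseudo_hermitian_probability_conservation
    {E : Type*} [NormedAddCommGroup E] [InnerProductSpace ℂ E] [CompleteSpace E]
    (hbar : ℝ) (hhbar : 0 < hbar)
    (H S : E →L[ℂ] E)
    (hqh : (ContinuousLinearMap.adjoint H) ∘L S = S ∘L H) :
    ∀ (t : ℝ) (ψ φ : E),
      ⟪(NormedSpace.exp ((-(t / hbar : ℂ) * Complex.I) • H)) ψ,
        S ((NormedSpace.exp ((-(t / hbar : ℂ) * Complex.I) • H)) φ)⟫_ℂ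
        = ⟪ψ, S φ⟫_ℂ :=
  pseudo_hermitian_probability_conservation_general hbar H S hqh
end

section
/- Let E be a complex Hilbert space, let G : E ≃L[ℂ] E be a continuous linear equivalence (an invertible bounded operator with bounded inverse, the Dyson map), set S := (adjoint G) ∘ G, and let H be a continuous linear operator on E satisfying the pseudo-Hermiticity relation (adjoint H) ∘ S = S ∘ H. Then the similarity transform h := G ∘ H ∘ G⁻¹ is self-adjoint: adjoint h = h. -/
/-!
The adjoint makes `E →L[ℂ] E` a star monoid, and the claim holds in any star monoid: writing
`star g = (star g * g) * g⁻¹`, the pseudo-Hermiticity relation moves `star h` past the metric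
`star g * g`, and `star g⁻¹ * star g = 1` cancels what is left.
-/

open ContinuousLinearMap

theorem IsSelfAdjoint.units_conj_of_star_mul_metric {R : Type*} [Monoid R] [StarMul R]
    (g : Rˣ) (h : R) (hph : star h * (star ↑g * ↑g) = (star ↑g * ↑g) * h) :
    IsSelfAdjoint (↑g * h * ↑g⁻¹) := by
  have star_inv_mul_star : star (↑g⁻¹ : R) * star ↑g = 1 := by
    rw [← star_mul, g.mul_inv, star_one]
  calc star (↑g * h * ↑g⁻¹)
      = star (↑g⁻¹ : R) * (star h * (star ↑g * ↑g)) * ↑g⁻¹ := by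
        simp only [star_mul, mul_assoc, g.mul_inv, mul_one]
    _ = (star (↑g⁻¹ : R) * star ↑g) * (↑g * h * ↑g⁻¹) := by
        rw [hph]; simp only [mul_assoc]
    _ = ↑g * h * ↑g⁻¹ := by rw [star_inv_mul_star, one_mul]

theorem dyson_map_hermitian_counterpart
    {E : Type*} [NormedAddCommGroup E] [InnerProductSpace ℂ E] [CompleteSpace E]
    (G : E ≃L[ℂ] E) (H : E →L[ℂ] E)
    (hph : (ContinuousLinearMap.adjoint H) ∘L
        ((ContinuousLinearMap.adjoint (G : E →L[ℂ] E)) ∘L (G : E →L[ℂ] E))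
      = ((ContinuousLinearMap.adjoint (G : E →L[ℂ] E)) ∘L (G : E →L[ℂ] E)) ∘L H) :
    ContinuousLinearMap.adjoint ((G : E →L[ℂ] E) ∘L H ∘L (G.symm : E →L[ℂ] E))
      = (G : E →L[ℂ] E) ∘L H ∘L (G.symm : E →L[ℂ] E) := by
  have hself := IsSelfAdjoint.units_conj_of_star_mul_metric G.toUnit H <| by
    simp only [← star_eq_adjoint, ← mul_def] at hph
    exact hph
  rw [← star_eq_adjoint, ← mul_def, ← mul_def, ← mul_assoc]
  exact hself
end

section
/- Fix real numbers τ and ħ, let w(x) = 1 − τ*x + τ²*x² (which is strictly positive for all x), and define the Hermitian deformed momentum operator by (p̂ f)(x) = −i*ħ*√(w(x)) * (d/dx)(fun y => √(w(y)) * f(y))(x). Then p̂ is symmetric with respect to the standard L² inner product: for all continuously differentiable f, g : ℝ → ℂ with compact support, ∫_ℝ conj((p̂ f)(x)) * g(x) dx = ∫_ℝ conj(f(x)) * (p̂ g)(x) dx. -/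
open MeasureTheory

/-- The Hermitian position-deformed momentum operator
`(p̂ f)(x) = -i ħ √(w x) (√w · f)'(x)` with `w x = 1 - τ x + τ² x²`. -/
noncomputable def hermitianDeformedMomentum (τ hbar : ℝ) (f : ℝ → ℂ) (x : ℝ) : ℂ :=
  -Complex.I * (hbar : ℂ) * (Real.sqrt (1 - τ * x + τ ^ 2 * x ^ 2) : ℂ) *
    deriv (fun y => (Real.sqrt (1 - τ * y + τ ^ 2 * y ^ 2) : ℂ) * f y) x

/-!
Writing `F = √w f` and `G = √w g`, one has `p̂ f = -iħ √w F'`, and since `√w` is real the two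
sides become `iħ ∫ conj F' G` and `-iħ ∫ conj F G'`. These agree by integration by parts on `ℝ`,
the boundary terms vanishing because `F` has compact support. Only the smoothness and reality of
the weight `√w` enter, which in turn only needs `w > 0`.
-/

open Complex ComplexConjugate

theorem integral_mul_deriv_eq_neg_integral_deriv_mul_of_hasCompactSupport
    {A : Type*} [NormedRing A] [NormedAlgebra ℝ A] {u v : ℝ → A}
    (hu : ContDiff ℝ 1 u) (hv : ContDiff ℝ 1 v) (hus : HasCompactSupport u) :
    ∫ x, u x * deriv v x = -∫ x, deriv u x * v x := by
  have hu' := hu.continuous_deriv le_rfl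
  have hv' := hv.continuous_deriv le_rfl
  exact integral_mul_deriv_eq_deriv_mul_of_integrable
    (fun x _ => (hu.differentiable one_ne_zero x).hasDerivAt)
    (fun x _ => (hv.differentiable one_ne_zero x).hasDerivAt)
    ((hu.continuous.mul hv').integrable_of_hasCompactSupport hus.mul_right)
    ((hu'.mul hv.continuous).integrable_of_hasCompactSupport hus.deriv.mul_right)
    ((hu.continuous.mul hv.continuous).integrable_of_hasCompactSupport hus.mul_right)

theorem integral_conj_deriv_mul_eq_neg_integral_conj_mul_deriv {F G : ℝ → ℂ}
    (hF : ContDiff ℝ 1 F) (hG : ContDiff ℝ 1 G) (hFs : HasCompactSupport F) :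
    ∫ x, conj (deriv F x) * G x = -∫ x, conj (F x) * deriv G x := by
  have := integral_mul_deriv_eq_neg_integral_deriv_mul_of_hasCompactSupport
    (conjCLE.contDiff.comp hF) hG (hFs.comp_left (map_zero conj))
  simp only [Function.comp_def, conjCLE_apply, ← star_def, deriv.star] at this
  simp only [star_def] at this
  rw [this, neg_neg]

noncomputable def weightedMomentum (hbar : ℝ) (s : ℝ → ℝ) (f : ℝ → ℂ) (x : ℝ) : ℂ :=
  -I * hbar * s x * deriv (fun y => (s y : ℂ) * f y) x

theorem integral_conj_weightedMomentum_mul {hbar : ℝ} {s : ℝ → ℝ} {f g : ℝ → ℂ}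
    (hs : ContDiff ℝ 1 s) (hf : ContDiff ℝ 1 f) (hg : ContDiff ℝ 1 g)
    (hfs : HasCompactSupport f) :
    ∫ x, conj (weightedMomentum hbar s f x) * g x
      = ∫ x, conj (f x) * weightedMomentum hbar s g x := by
  have hsC : ContDiff ℝ 1 fun x => (s x : ℂ) := ofRealCLM.contDiff.comp hs
  have hibp := integral_conj_deriv_mul_eq_neg_integral_conj_mul_deriv (hsC.mul hf) (hsC.mul hg)
    hfs.mul_left
  calc ∫ x, conj (weightedMomentum hbar s f x) * g x
      = I * hbar * ∫ x, conj (deriv (fun y => (s y : ℂ) * f y) x) * (s x * g x) := by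
        rw [← integral_const_mul]
        congr 1 with x
        simp only [weightedMomentum, map_mul, map_neg, conj_I, conj_ofReal]
        ring
    _ = -I * hbar * ∫ x, conj (s x * f x) * deriv (fun y => (s y : ℂ) * g y) x := by
        rw [hibp]; ring
    _ = ∫ x, conj (f x) * weightedMomentum hbar s g x := by
        rw [← integral_const_mul]
        congr 1 with x
        simp only [weightedMomentum, map_mul, conj_ofReal]
        ring

theorem contDiff_sqrt_deformationWeight (τ : ℝ) {n : WithTop ℕ∞} :
    ContDiff ℝ n fun x : ℝ => √(1 - τ * x + τ ^ 2 * x ^ 2) :=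
  (by fun_prop : ContDiff ℝ n fun x : ℝ => 1 - τ * x + τ ^ 2 * x ^ 2).sqrt fun x =>
    (by nlinarith [sq_nonneg (2 * (τ * x) - 1)] : (0 : ℝ) < _).ne'

theorem hermitian_deformed_momentum_symmetric_general (τ hbar : ℝ) (f g : ℝ → ℂ)
    (hf : ContDiff ℝ 1 f) (hg : ContDiff ℝ 1 g)
    (hfs : HasCompactSupport f) :
    ∫ x : ℝ, (starRingEnd ℂ) (hermitianDeformedMomentum τ hbar f x) * g x
      = ∫ x : ℝ, (starRingEnd ℂ) (f x) * hermitianDeformedMomentum τ hbar g x :=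
  integral_conj_weightedMomentum_mul (contDiff_sqrt_deformationWeight τ) hf hg hfs

theorem hermitian_deformed_momentum_symmetric (τ hbar : ℝ) (f g : ℝ → ℂ)
    (hf : ContDiff ℝ 1 f) (hg : ContDiff ℝ 1 g)
    (hfs : HasCompactSupport f) (hgs : HasCompactSupport g) :
    ∫ x : ℝ, (starRingEnd ℂ) (hermitianDeformedMomentum τ hbar f x) * g x
      = ∫ x : ℝ, (starRingEnd ℂ) (f x) * hermitianDeformedMomentum τ hbar g x :=
  hermitian_deformed_momentum_symmetric_general τ hbar f g hf hg hfs
end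

section
/- Let τ > 0, ħ > 0, ξ ∈ ℝ and C ∈ ℂ, and define Φ : ℝ → ℂ by Φ(x) = C * (1 − τ*x + τ²*x²)^{−1/2} * exp(i * (2*ξ/(τ*ħ*√3)) * (arctan((2*τ*x − 1)/√3) + π/6)). Then Φ is an eigenfunction of the Hermitian deformed momentum with eigenvalue ξ: for every real x, −i*ħ*√(1 − τ*x + τ²*x²) * (d/dx)(fun y => √(1 − τ*y + τ²*y²) * Φ(y))(x) = ξ * Φ(x). -/
/-- The deformed plane wave `Φ_ξ`. -/
noncomputable def deformedPlaneWave (τ hbar ξ : ℝ) (C : ℂ) (x : ℝ) : ℂ :=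
  C * (((1 - τ * x + τ ^ 2 * x ^ 2 : ℝ) ^ (-(1 / 2) : ℝ) : ℝ) : ℂ) *
    Complex.exp (Complex.I * ((2 * ξ / (τ * hbar * Real.sqrt 3) : ℝ) : ℂ) *
      ((Real.arctan ((2 * τ * x - 1) / Real.sqrt 3) + Real.pi / 6 : ℝ) : ℂ))

/-!
Multiplying by `√w` strips the amplitude `w^{-1/2}` off the plane wave, leaving the pure phase
`C exp(i ξ G / ħ)`, where `G = 2/(τ√3) (arctan((2τx - 1)/√3) + π/6)` is an antiderivative of `1/w`.
Differentiating the phase brings down `i ξ / (ħ w)`, and multiplying back by `-i ħ √w`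
returns `ξ w^{-1/2}` times the phase, i.e. `ξ Φ`.
-/

open Complex

namespace Real

lemma rpow_neg_half_eq_inv_sqrt {w : ℝ} (hw : 0 ≤ w) : w ^ (-(1 / 2) : ℝ) = (√w)⁻¹ := by
  rw [rpow_neg hw, sqrt_eq_rpow]

lemma sqrt_mul_rpow_neg_half {w : ℝ} (hw : 0 < w) : √w * w ^ (-(1 / 2) : ℝ) = 1 := by
  rw [rpow_neg_half_eq_inv_sqrt hw.le, mul_inv_cancel₀ (sqrt_pos.mpr hw).ne']

end Real

noncomputable def weightedPlaneWave (w G : ℝ → ℝ) (hbar ξ : ℝ) (C : ℂ) (y : ℝ) : ℂ :=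
  C * ((w y ^ (-(1 / 2) : ℝ) : ℝ) : ℂ) * exp (I * ((ξ / hbar * G y : ℝ) : ℂ))

theorem sqrt_mul_deriv_sqrt_mul_weightedPlaneWave {w G : ℝ → ℝ} (hw : ∀ y, 0 < w y) {x : ℝ}
    (hG : HasDerivAt G (w x)⁻¹ x) {hbar : ℝ} (hhbar : hbar ≠ 0) (ξ : ℝ) (C : ℂ) :
    -I * hbar * (√(w x) : ℂ) *
        deriv (fun y => (√(w y) : ℂ) * weightedPlaneWave w G hbar ξ C y) x
      = ξ * weightedPlaneWave w G hbar ξ C x := by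
  have hphase : (fun y => (√(w y) : ℂ) * weightedPlaneWave w G hbar ξ C y)
      = fun y => C * exp (I * ((ξ / hbar * G y : ℝ) : ℂ)) := by
    funext y
    rw [weightedPlaneWave]
    have hamp := congrArg ((↑) : ℝ → ℂ) (Real.sqrt_mul_rpow_neg_half (hw y))
    push_cast at hamp
    linear_combination (C * exp (I * ((ξ / hbar * G y : ℝ) : ℂ))) * hamp
  have hderiv : HasDerivAt (fun y => C * exp (I * ((ξ / hbar * G y : ℝ) : ℂ)))
      (C * (exp (I * ((ξ / hbar * G x : ℝ) : ℂ)) * (I * ((ξ / hbar * (w x)⁻¹ : ℝ) : ℂ)))) x :=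
    ((((hG.const_mul (ξ / hbar)).ofReal_comp).const_mul I).cexp).const_mul C
  have hsqrt : (√(w x) : ℂ) ≠ 0 := ofReal_ne_zero.mpr (Real.sqrt_pos.mpr (hw x)).ne'
  have hwx : (w x : ℂ) ≠ 0 := ofReal_ne_zero.mpr (hw x).ne'
  have hhbar' : (hbar : ℂ) ≠ 0 := ofReal_ne_zero.mpr hhbar
  have hsq : (√(w x) : ℂ) * √(w x) = w x := by
    exact_mod_cast Real.mul_self_sqrt (hw x).le
  rw [hphase, hderiv.deriv, weightedPlaneWave, Real.rpow_neg_half_eq_inv_sqrt (hw x).le]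
  push_cast
  field_simp
  linear_combination (-(√(w x) * √(w x) * C * ξ : ℂ)) * I_mul_I + (C * ξ) * hsq

lemma one_sub_mul_add_sq_mul_sq_pos (τ y : ℝ) : 0 < 1 - τ * y + τ ^ 2 * y ^ 2 := by
  nlinarith [sq_nonneg (τ * y - 1 / 2)]

noncomputable def deformedPhase (τ y : ℝ) : ℝ :=
  2 / (τ * √3) * (Real.arctan ((2 * τ * y - 1) / √3) + Real.pi / 6)

lemma hasDerivAt_deformedPhase {τ : ℝ} (hτ : τ ≠ 0) (x : ℝ) :
    HasDerivAt (deformedPhase τ) (1 - τ * x + τ ^ 2 * x ^ 2)⁻¹ x := by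
  have hlin : HasDerivAt (fun y : ℝ => (2 * τ * y - 1) / √3) (2 * τ / √3) x := by
    simpa using (((hasDerivAt_id x).const_mul (2 * τ)).sub_const 1).div_const √3
  refine ((((Real.hasDerivAt_arctan _).comp x hlin).add_const (Real.pi / 6)).const_mul
    (2 / (τ * √3))).congr_deriv ?_
  have h3 : √3 ^ 2 = 3 := Real.sq_sqrt (by norm_num)
  have hw := one_sub_mul_add_sq_mul_sq_pos τ x
  field_simp
  rw [h3]
  ring

theorem deformed_plane_wave_eigenfunction (τ hbar ξ : ℝ) (hτ : 0 < τ) (hhbar : 0 < hbar)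
    (C : ℂ) (x : ℝ) :
    hermitianDeformedMomentum τ hbar (deformedPlaneWave τ hbar ξ C) x
      = (ξ : ℂ) * deformedPlaneWave τ hbar ξ C x := by
  have hΦ : deformedPlaneWave τ hbar ξ C = weightedPlaneWave
      (fun y => 1 - τ * y + τ ^ 2 * y ^ 2) (deformedPhase τ) hbar ξ C := by
    funext y
    simp only [deformedPlaneWave, weightedPlaneWave, deformedPhase]
    congr 2
    push_cast
    ring
  rw [hermitianDeformedMomentum, hΦ]
  exact sqrt_mul_deriv_sqrt_mul_weightedPlaneWave (one_sub_mul_add_sq_mul_sq_pos τ)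
    (hasDerivAt_deformedPhase hτ.ne' x) hhbar.ne' ξ C
end
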